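/- arXiv:1609.00973 — 2 statements merged into one kernel-verified Lean document; each statement's English description precedes it below -/
import Mathlib

section
/- Let f : [0,1] → ℝ be the piecewise linear function f(x) = 1.5x for 0 ≤ x ≤ 1/3, f(x) = 0.5 for 1/3 < x ≤ 2/3, and f(x) = 1.5x − 0.5 for 2/3 < x ≤ 1. If Λ is a Λ-sequence with λ_1 < λ_2, δ satisfies 2/3 < δ < 1, and n ≥ 1, then V_{Λ,δ}(B_nf) > V_{Λ,δ}(f); in particular the Bernstein polynomials do not diminish the restricted Λ-variation V_{Λ,δ}. -/
/-!
`fex` is nondecreasing, fixes `0` and `1`, and rises by at most `M = 1.5δ - 0.5` over any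
subinterval of `[0,1]` of length `≤ δ`. In a sum defining `V_{Λ,δ}(fex)` the first interval
thus contributes at most `v/λ₁` with `v ≤ M`, and the others, weighted by at most `1/λ₂`,
rise by at most `1 - v` in total; as `λ₁ ≤ λ₂` this bounds `V_{Λ,δ}(fex)` by
`M/λ₁ + (1 - M)/λ₂`. The polynomial `B_n fex` also fixes `0` and `1`, and since `B_n`
reproduces affine functions and `fex` lies above the line `1.5x - 0.5`, strictly at the node
`0`, we get `t = B_n fex(δ) > M`. The intervals `[0,δ]` and `[δ,1]` then show
`V_{Λ,δ}(B_n fex) ≥ t/λ₁ + (1 - t)/λ₂ > M/λ₁ + (1 - M)/λ₂`, using `λ₁ < λ₂`.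
-/

open Filter Set MeasureTheory
open scoped ENNReal Topology

/-- `l` is a Λ-sequence (indexed from 0, so `l 0` plays the role of `λ₁`):
a nondecreasing sequence of positive reals whose reciprocals have divergent sum. -/
def IsLambdaSeq (l : ℕ → ℝ) : Prop :=
  Monotone l ∧ (∀ n, 0 < l n) ∧ ¬ Summable (fun n => 1 / l n)

/-- A proper Λ-sequence: additionally `λₙ → ∞`. -/
def IsProperLambdaSeq (l : ℕ → ℝ) : Prop :=
  IsLambdaSeq l ∧ Tendsto l atTop atTop

/-- The Λ-variation of `f` computed over partition points taken from `K`: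
the supremum of `∑ⱼ |f(x_{j+1}) - f(x_j)| / λ_{β(j)}` over all `m`, all nondecreasing
tuples `x₁ ≤ … ≤ x_{m+1}` of points of `K` and all permutations `β` of the gaps. -/
noncomputable def lamVarOn (l : ℕ → ℝ) (f : ℝ → ℝ) (K : Set ℝ) : ℝ≥0∞ :=
  ⨆ (m : ℕ) (x : Fin (m + 1) → ℝ) (_ : Monotone x) (_ : ∀ j, x j ∈ K)
    (β : Equiv.Perm (Fin m)),
    ∑ j : Fin m, ENNReal.ofReal (|f (x j.succ) - f (x j.castSucc)| / l (β j))

/-- The Λ-variation of `f : [0,1] → ℝ`. -/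
noncomputable def lamVar (l : ℕ → ℝ) (f : ℝ → ℝ) : ℝ≥0∞ :=
  lamVarOn l f (Set.Icc 0 1)

/-- The norm `‖f‖_Λ = V_Λ(f) + |f 0|` (valued in `[0,∞]`). -/
noncomputable def lamNorm (l : ℕ → ℝ) (f : ℝ → ℝ) : ℝ≥0∞ :=
  lamVar l f + ENNReal.ofReal |f 0|

/-- `f` is continuous in Λ-variation: `V_{Λ_(m)}(f) → 0` as `m → ∞`. -/
def ContInLamVar (l : ℕ → ℝ) (f : ℝ → ℝ) : Prop :=
  Tendsto (fun m => lamVar (fun n => l (n + m)) f) atTop (𝓝 0)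

/-- The restricted Λ-variation `V_{Λ,δ}(f)`: the supremum of `∑ⱼ |f(bⱼ) - f(aⱼ)| / λⱼ`
over all finite sequences of nonoverlapping closed subintervals `[aⱼ, bⱼ]` of `[0,1]`
of length at most `δ`, listed in any order. -/
noncomputable def lamVarDelta (l : ℕ → ℝ) (δ : ℝ) (f : ℝ → ℝ) : ℝ≥0∞ :=
  ⨆ (k : ℕ) (a : Fin k → ℝ) (b : Fin k → ℝ)
    (_ : ∀ j, 0 ≤ a j ∧ a j ≤ b j ∧ b j ≤ 1 ∧ b j - a j ≤ δ)
    (_ : ∀ i j, i ≠ j → b i ≤ a j ∨ b j ≤ a i),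
    ∑ j : Fin k, ENNReal.ofReal (|f (b j) - f (a j)| / l j)

/-- The `n`-th Bernstein polynomial of `f : [0,1] → ℝ`. -/
noncomputable def bern (n : ℕ) (f : ℝ → ℝ) (x : ℝ) : ℝ :=
  ∑ k ∈ Finset.range (n + 1),
    f ((k : ℝ) / n) * (n.choose k : ℝ) * x ^ k * (1 - x) ^ (n - k)

/-- The `n`-th Kantorovich polynomial of `f : [0,1] → ℝ`. -/
noncomputable def kant (n : ℕ) (f : ℝ → ℝ) (x : ℝ) : ℝ :=
  ∑ k ∈ Finset.range (n + 1),
    (n.choose k : ℝ) * x ^ k * (1 - x) ^ (n - k) *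
      ((n + 1) * ∫ t in ((k : ℝ) / (n + 1))..(((k : ℝ) + 1) / (n + 1)), f t)

/-- The piecewise linear function of the counterexample. -/
noncomputable def fex (x : ℝ) : ℝ :=
  if x ≤ 1 / 3 then 1.5 * x else if x ≤ 2 / 3 then 0.5 else 1.5 * x - 0.5

open Finset

theorem Monotone.sum_sub_le_of_nonoverlapping {f : ℝ → ℝ} (hf : Monotone f) {ι : Type*}
    (a b : ι → ℝ) (s : Finset ι) {c d : ℝ} (hcd : c ≤ d)
    (hsub : ∀ j ∈ s, c ≤ a j ∧ a j ≤ b j ∧ b j ≤ d)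
    (hdisj : ∀ i ∈ s, ∀ j ∈ s, i ≠ j → b i ≤ a j ∨ b j ≤ a i) :
    ∑ j ∈ s, (f (b j) - f (a j)) ≤ f d - f c := by
  classical
  induction s using Finset.strongInduction generalizing c with
  | H s ih =>
  rcases s.eq_empty_or_nonempty with rfl | hs
  · simpa using hf hcd
  obtain ⟨i, hi, hmin⟩ := s.exists_min_image b hs
  have hsub' : ∀ j ∈ s.erase i, c ≤ a j ∧ a j ≤ b j ∧ b j ≤ d :=
    fun j hj => hsub j (mem_of_mem_erase hj)
  have hdisj' : ∀ j ∈ s.erase i, ∀ k ∈ s.erase i, j ≠ k → b j ≤ a k ∨ b k ≤ a j :=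
    fun j hj k hk => hdisj j (mem_of_mem_erase hj) k (mem_of_mem_erase hk)
  rw [← add_sum_erase s _ hi]
  obtain ⟨hci, hai, hid⟩ := hsub i hi
  by_cases hdeg : a i = b i
  · rw [hdeg, sub_self, zero_add]
    exact ih _ (erase_ssubset hi) hcd hsub' hdisj'
  -- `i` has the least right endpoint and is nondegenerate, so the others lie to its right.
  have hright : ∀ j ∈ s.erase i, b i ≤ a j ∧ a j ≤ b j ∧ b j ≤ d := by
    intro j hj
    refine ⟨?_, (hsub' j hj).2⟩
    rcases hdisj i hi j (mem_of_mem_erase hj) (ne_of_mem_erase hj).symm with h | h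
    · exact h
    · exact absurd (le_antisymm hai ((hmin j (mem_of_mem_erase hj)).trans h)) hdeg
  have hrest := ih _ (erase_ssubset hi) hid hright hdisj'
  linarith [hf hci]

theorem div_add_sub_div_le {p q s t T : ℝ} (hp : 0 < p) (hpq : p ≤ q) (hst : s ≤ t) :
    s / p + (T - s) / q ≤ t / p + (T - t) / q := by
  have hinv : 1 / q ≤ 1 / p := one_div_le_one_div_of_le hp hpq
  have hs : s / p + (T - s) / q = T / q + s * (1 / p - 1 / q) := by ring
  have ht : t / p + (T - t) / q = T / q + t * (1 / p - 1 / q) := by ring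
  rw [hs, ht]
  gcongr

theorem div_add_sub_div_lt {p q s t T : ℝ} (hp : 0 < p) (hpq : p < q) (hst : s < t) :
    s / p + (T - s) / q < t / p + (T - t) / q := by
  have hinv : 1 / q < 1 / p := one_div_lt_one_div_of_lt hp hpq
  have hs : s / p + (T - s) / q = T / q + s * (1 / p - 1 / q) := by ring
  have ht : t / p + (T - t) / q = T / q + t * (1 / p - 1 / q) := by ring
  rw [hs, ht]
  gcongr

theorem le_lamVarDelta {l : ℕ → ℝ} {δ : ℝ} (g : ℝ → ℝ) {k : ℕ} (a b : Fin k → ℝ)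
    (hab : ∀ j, 0 ≤ a j ∧ a j ≤ b j ∧ b j ≤ 1 ∧ b j - a j ≤ δ)
    (hdisj : ∀ i j, i ≠ j → b i ≤ a j ∨ b j ≤ a i) :
    ∑ j : Fin k, ENNReal.ofReal (|g (b j) - g (a j)| / l j) ≤ lamVarDelta l δ g :=
  le_iSup_of_le k <| le_iSup_of_le a <| le_iSup_of_le b <| le_iSup_of_le hab <|
    le_iSup_of_le hdisj le_rfl

theorem ofReal_le_lamVarDelta_of_two_intervals {l : ℕ → ℝ} (hl₀ : 0 ≤ l 0) (hl₁ : 0 ≤ l 1)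
    {δ : ℝ} (hδ₀ : 1 / 2 ≤ δ) (hδ₁ : δ ≤ 1) (g : ℝ → ℝ) :
    ENNReal.ofReal (|g δ - g 0| / l 0 + |g 1 - g δ| / l 1) ≤ lamVarDelta l δ g := by
  have hab : ∀ j, 0 ≤ ![0, δ] j ∧ ![0, δ] j ≤ ![δ, 1] j ∧ ![δ, 1] j ≤ 1 ∧
      ![δ, 1] j - ![0, δ] j ≤ δ := by
    intro j
    fin_cases j <;> simp <;> and_intros <;> linarith
  have hdisj : ∀ i j, i ≠ j → ![δ, 1] i ≤ ![0, δ] j ∨ ![δ, 1] j ≤ ![0, δ] i := by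
    intro i j hij
    fin_cases i <;> fin_cases j <;> simp_all
  rw [ENNReal.ofReal_add (by positivity) (by positivity)]
  simpa [Fin.sum_univ_two] using le_lamVarDelta g _ _ hab hdisj

theorem lamVarDelta_le_of_monotone {l : ℕ → ℝ} (hl : Monotone l) (hpos : ∀ n, 0 < l n)
    {g : ℝ → ℝ} (hg : Monotone g) {δ M : ℝ}
    (hM : ∀ a b, 0 ≤ a → a ≤ b → b ≤ 1 → b - a ≤ δ → g b - g a ≤ M) :
    lamVarDelta l δ g ≤ ENNReal.ofReal (M / l 0 + (g 1 - g 0 - M) / l 1) := by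
  refine iSup_le fun k => iSup_le fun a => iSup_le fun b => iSup_le fun hab =>
    iSup_le fun hdisj => ?_
  rcases k with _ | k
  · simp
  set v : Fin (k + 1) → ℝ := fun j => g (b j) - g (a j)
  have hv : ∀ j, 0 ≤ v j := fun j => sub_nonneg.2 (hg (hab j).2.1)
  have htotal : v 0 + ∑ j : Fin k, v j.succ ≤ g 1 - g 0 := by
    rw [← Fin.sum_univ_succ]
    exact hg.sum_sub_le_of_nonoverlapping a b univ zero_le_one
      (fun j _ => ⟨(hab j).1, (hab j).2.1, (hab j).2.2.1⟩) (fun i _ j _ => hdisj i j)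
  have htail : ∑ j : Fin k, v j.succ / l j.succ ≤ (∑ j : Fin k, v j.succ) / l 1 := by
    rw [sum_div]
    exact sum_le_sum fun j _ =>
      div_le_div_of_nonneg_left (hv _) (hpos 1) (hl (Nat.succ_le_succ (Nat.zero_le _)))
  rw [← ENNReal.ofReal_sum_of_nonneg fun j _ => div_nonneg (abs_nonneg _) (hpos _).le]
  refine ENNReal.ofReal_le_ofReal ?_
  have habs : ∀ j, |g (b j) - g (a j)| = v j := fun j => abs_of_nonneg (hv j)
  simp only [habs, Fin.sum_univ_succ]
  calc v 0 / l 0 + ∑ j : Fin k, v j.succ / l j.succ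
      ≤ v 0 / l 0 + (g 1 - g 0 - v 0) / l 1 := by
        have := div_le_div_of_nonneg_right
          (by linarith : ∑ j : Fin k, v j.succ ≤ g 1 - g 0 - v 0) (hpos 1).le
        linarith
    _ ≤ M / l 0 + (g 1 - g 0 - M) / l 1 :=
        div_add_sub_div_le (hpos 0) (hl zero_le_one)
          (hM _ _ (hab 0).1 (hab 0).2.1 (hab 0).2.2.1 (hab 0).2.2.2)

theorem bern_eq_sum_eval (n : ℕ) (f : ℝ → ℝ) (x : ℝ) :
    bern n f x = ∑ k ∈ range (n + 1), f (k / n) * (bernsteinPolynomial ℝ n k).eval x := by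
  simp only [bern, bernsteinPolynomial, Polynomial.eval_mul, Polynomial.eval_natCast,
    Polynomial.eval_pow, Polynomial.eval_X, Polynomial.eval_sub, Polynomial.eval_one, mul_assoc]

theorem bern_apply_zero (n : ℕ) (f : ℝ → ℝ) : bern n f 0 = f 0 := by
  simp [bern_eq_sum_eval, bernsteinPolynomial.eval_at_0]

theorem bern_apply_one {n : ℕ} (hn : n ≠ 0) (f : ℝ → ℝ) : bern n f 1 = f 1 := by
  simp [bern_eq_sum_eval, bernsteinPolynomial.eval_at_1, hn]

theorem bern_affine {n : ℕ} (hn : n ≠ 0) (α β x : ℝ) :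
    bern n (fun y => α * y + β) x = α * x + β := by
  have hsum := congrArg (Polynomial.eval x) (bernsteinPolynomial.sum ℝ n)
  have hsmul := congrArg (Polynomial.eval x) (bernsteinPolynomial.sum_smul ℝ n)
  simp only [Polynomial.eval_finsetSum, Polynomial.eval_one,
    Polynomial.eval_mul, Polynomial.eval_natCast, Polynomial.eval_X, nsmul_eq_mul] at hsum hsmul
  have hn' : (n : ℝ) ≠ 0 := Nat.cast_ne_zero.2 hn
  calc bern n (fun y => α * y + β) x
      = α / n * ∑ k ∈ range (n + 1), k * (bernsteinPolynomial ℝ n k).eval x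
        + β * ∑ k ∈ range (n + 1), (bernsteinPolynomial ℝ n k).eval x := by
        rw [bern_eq_sum_eval, mul_sum, mul_sum, ← sum_add_distrib]
        exact sum_congr rfl fun k _ => by ring
    _ = α * x + β := by rw [hsum, hsmul]; field_simp

theorem bern_const (n : ℕ) (c x : ℝ) : bern n (fun _ => c) x = c := by
  have hsum := congrArg (Polynomial.eval x) (bernsteinPolynomial.sum ℝ n)
  simp only [Polynomial.eval_finsetSum, Polynomial.eval_one] at hsum
  rw [bern_eq_sum_eval, ← mul_sum, hsum, mul_one]

theorem bernsteinPolynomial_eval_nonneg {n k : ℕ} {x : ℝ} (hx : x ∈ Icc (0 : ℝ) 1) :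
    0 ≤ (bernsteinPolynomial ℝ n k).eval x := by
  simp only [bernsteinPolynomial, Polynomial.eval_mul, Polynomial.eval_natCast,
    Polynomial.eval_pow, Polynomial.eval_X, Polynomial.eval_sub, Polynomial.eval_one]
  obtain ⟨hx₀, hx₁⟩ := hx
  have := sub_nonneg.2 hx₁
  positivity

theorem natCast_div_mem_Icc {n k : ℕ} (hk : k ∈ range (n + 1)) :
    (k / n : ℝ) ∈ Icc (0 : ℝ) 1 :=
  ⟨by positivity, div_le_one_of_le₀ (by exact_mod_cast Nat.lt_succ_iff.1 (mem_range.1 hk))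
    (Nat.cast_nonneg n)⟩

theorem bern_le_bern {n : ℕ} {f g : ℝ → ℝ} (hfg : ∀ y ∈ Icc (0 : ℝ) 1, f y ≤ g y) {x : ℝ}
    (hx : x ∈ Icc (0 : ℝ) 1) : bern n f x ≤ bern n g x := by
  simp only [bern_eq_sum_eval]
  exact sum_le_sum fun k hk =>
    mul_le_mul_of_nonneg_right (hfg _ (natCast_div_mem_Icc hk)) (bernsteinPolynomial_eval_nonneg hx)

theorem bern_lt_bern {n : ℕ} {f g : ℝ → ℝ} (hfg : ∀ y ∈ Icc (0 : ℝ) 1, f y ≤ g y)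
    (h₀ : f 0 < g 0) {x : ℝ} (hx₀ : 0 ≤ x) (hx₁ : x < 1) : bern n f x < bern n g x := by
  simp only [bern_eq_sum_eval]
  refine sum_lt_sum (fun k hk => mul_le_mul_of_nonneg_right (hfg _ (natCast_div_mem_Icc hk))
    (bernsteinPolynomial_eval_nonneg ⟨hx₀, hx₁.le⟩)) ⟨0, by simp, ?_⟩
  have : 0 < (bernsteinPolynomial ℝ n 0).eval x := by
    simp [bernsteinPolynomial, sub_pos.2 hx₁]
  simpa using mul_lt_mul_of_pos_right h₀ this

theorem fex_zero : fex 0 = 0 := by norm_num [fex]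

theorem fex_one : fex 1 = 1 := by norm_num [fex]

theorem monotone_fex : Monotone fex := by
  intro x y hxy
  unfold fex
  split_ifs <;> linarith

theorem affine_le_fex (x : ℝ) : 1.5 * x - 0.5 ≤ fex x := by
  unfold fex
  split_ifs <;> linarith

theorem fex_sub_le {δ a b : ℝ} (hδ : 2 / 3 ≤ δ) (ha : 0 ≤ a) (hb : b ≤ 1) (hab : b - a ≤ δ) :
    fex b - fex a ≤ 1.5 * δ - 0.5 := by
  unfold fex
  split_ifs <;> linarith

/-- If `Λ` is a Λ-sequence with `λ₁ < λ₂`, `2/3 < δ < 1` and `n ≥ 1`, then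
`V_{Λ,δ}(B_n f) > V_{Λ,δ}(f)`: the Bernstein polynomials do not diminish `V_{Λ,δ}`. -/
theorem bernstein_not_diminish_lamVarDelta (l : ℕ → ℝ) (hl : IsLambdaSeq l)
    (hl12 : l 0 < l 1) (δ : ℝ) (hδ1 : 2 / 3 < δ) (hδ2 : δ < 1) (n : ℕ) (hn : 1 ≤ n) :
    lamVarDelta l δ (bern n fex) > lamVarDelta l δ fex := by
  obtain ⟨hmono, hpos, -⟩ := hl
  have hn0 : n ≠ 0 := Nat.one_le_iff_ne_zero.1 hn
  set t := bern n fex δ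
  have hMt : 1.5 * δ - 0.5 < t := by
    have := bern_lt_bern (n := n) (f := fun y => 1.5 * y + -0.5) (g := fex)
      (fun y _ => by linarith [affine_le_fex y]) (by norm_num [fex_zero]) (by linarith) hδ2
    rw [bern_affine hn0] at this
    linarith
  have ht1 : t ≤ 1 := by
    have := bern_le_bern (n := n) (f := fex) (g := fun _ => 1)
      (fun y hy => fex_one ▸ monotone_fex hy.2) ⟨by linarith, hδ2.le⟩
    rwa [bern_const] at this
  have ht0 : 0 < t := by linarith
  calc lamVarDelta l δ fex
      ≤ ENNReal.ofReal ((1.5 * δ - 0.5) / l 0 + (1 - (1.5 * δ - 0.5)) / l 1) := by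
        simpa only [fex_zero, fex_one, sub_zero] using lamVarDelta_le_of_monotone hmono hpos
          monotone_fex fun a b ha _ hb hab => fex_sub_le hδ1.le ha hb hab
    _ < ENNReal.ofReal (t / l 0 + (1 - t) / l 1) :=
        (ENNReal.ofReal_lt_ofReal_iff (add_pos_of_pos_of_nonneg (div_pos ht0 (hpos 0))
          (div_nonneg (sub_nonneg.2 ht1) (hpos 1).le))).2 (div_add_sub_div_lt (hpos 0) hl12 hMt)
    _ = ENNReal.ofReal (|t - bern n fex 0| / l 0 + |bern n fex 1 - t| / l 1) := by
        rw [bern_apply_zero, bern_apply_one hn0, fex_zero, fex_one, sub_zero, abs_of_pos ht0,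
          abs_of_nonneg (sub_nonneg.2 ht1)]
    _ ≤ lamVarDelta l δ (bern n fex) :=
        ofReal_le_lamVarDelta_of_two_intervals (hpos 0).le (hpos 1).le (by linarith) hδ2.le _
end

section
/- If Λ is a Λ-sequence and f : [0,1] → ℝ is continuous and of bounded Λ-variation, then ‖B_nf‖_Λ → ‖f‖_Λ as n → ∞. -/
open Filter Set MeasureTheory
open scoped ENNReal Topology

/-!
For a monotone tuple `x₀ ≤ … ≤ x_m` in `[0,1]`, split `[0,1]` into the `m + 2` cells cut out by
the `xⱼ` and throw `n` independent points into the cells according to their lengths. If `Nⱼ` is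
the number of points landing left of `xⱼ`, then `Nⱼ` is binomial with parameters `n, xⱼ`, so
`B_n f(xⱼ) = E f(Nⱼ / n)`, and `N₀ ≤ … ≤ N_m` for every outcome. Hence every Λ-sum of `B_n f` is
an average of Λ-sums of `f` along monotone tuples, and `V_Λ(B_n f) ≤ V_Λ(f)`. Conversely
`B_n f → f` pointwise and `V_Λ` is lower semicontinuous under pointwise convergence, while
`B_n f(0) = f(0)`.
-/

open Finset

theorem sum_pi_prod_mul_card_filter_mem {R A : Type*} [CommSemiring R] [Fintype A]
    [DecidableEq A] (q : A → R) (B : Finset A) (n : ℕ) (g : ℕ → R) :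
    ∑ φ : Fin n → A, (∏ i, q (φ i)) * g #{i | φ i ∈ B} =
      ∑ k ∈ range (n + 1),
        (n.choose k : R) * (∑ a ∈ B, q a) ^ k * (∑ a ∈ Bᶜ, q a) ^ (n - k) * g k := by
  set hits : (Fin n → A) → Finset (Fin n) := fun φ => {i | φ i ∈ B}
  have sum_fiber (S : Finset (Fin n)) : ∑ φ with hits φ = S, ∏ i, q (φ i) =
      (∑ a ∈ B, q a) ^ #S * (∑ a ∈ Bᶜ, q a) ^ (n - #S) := by
    have hS : ({φ | hits φ = S} : Finset (Fin n → A)) =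
        Fintype.piFinset fun i => if i ∈ S then B else Bᶜ := by
      ext φ
      simp only [hits, mem_filter, Finset.mem_univ, true_and, Fintype.mem_piFinset,
        Finset.ext_iff]
      refine forall_congr' fun i => ?_
      split_ifs with hi <;> simp [hi]
    rw [hS, ← prod_univ_sum]
    simp [apply_ite (fun t => ∑ a ∈ t, q a), prod_ite, filter_not, card_univ_sdiff]
  calc ∑ φ : Fin n → A, (∏ i, q (φ i)) * g #(hits φ)
      = ∑ S : Finset (Fin n), ∑ φ with hits φ = S, (∏ i, q (φ i)) * g #S := by
        rw [← sum_fiberwise univ hits]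
        refine sum_congr rfl fun S _ => sum_congr rfl fun φ hφ => ?_
        rw [(mem_filter.mp hφ).2]
    _ = ∑ S ∈ (univ : Finset (Fin n)).powerset,
          (∑ a ∈ B, q a) ^ #S * (∑ a ∈ Bᶜ, q a) ^ (n - #S) * g #S := by
        simp only [Finset.powerset_univ, ← sum_mul, sum_fiber]
    _ = _ := by
        rw [sum_powerset_apply_card
          (fun k => (∑ a ∈ B, q a) ^ k * (∑ a ∈ Bᶜ, q a) ^ (n - k) * g k),
          card_univ, Fintype.card_fin]
        refine sum_congr rfl fun k _ => ?_
        rw [nsmul_eq_mul]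
        ring

theorem bern_sum_eq_sum_pi {A : Type*} [Fintype A] [DecidableEq A] (f : ℝ → ℝ) (n : ℕ)
    (q : A → ℝ) (hq : ∑ a, q a = 1) (B : Finset A) :
    bern n f (∑ a ∈ B, q a) = ∑ φ : Fin n → A, (∏ i, q (φ i)) * f (#{i | φ i ∈ B} / n) := by
  have hcompl : ∑ a ∈ Bᶜ, q a = 1 - ∑ a ∈ B, q a := by
    rw [← hq, ← sum_add_sum_compl B]
    ring
  rw [sum_pi_prod_mul_card_filter_mem q B n (fun k => f (k / n)), hcompl, bern]
  exact sum_congr rfl fun k _ => by ring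

theorem bern_apply_eq_bernsteinApproximation {f : ℝ → ℝ} (hc : ContinuousOn f (Set.Icc 0 1))
    (n : ℕ) {x : ℝ} (hx : x ∈ Set.Icc (0 : ℝ) 1) :
    bern n f x = bernsteinApproximation n ⟨_, hc.domRestrict⟩ ⟨x, hx⟩ := by
  rw [bernsteinApproximation.apply, bern, sum_range]
  refine sum_congr rfl fun k _ => ?_
  rw [bernstein_apply]
  simp only [ContinuousMap.coe_mk, Set.domRestrict_apply, bernstein.z]
  ring

theorem tendsto_bern {f : ℝ → ℝ} (hc : ContinuousOn f (Set.Icc 0 1)) {x : ℝ}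
    (hx : x ∈ Set.Icc (0 : ℝ) 1) : Tendsto (fun n => bern n f x) atTop (𝓝 (f x)) := by
  simp only [bern_apply_eq_bernsteinApproximation hc _ hx]
  exact ((continuous_eval_const _).tendsto _).comp (bernsteinApproximation_uniform _)

theorem Fin.monotone_snoc {α : Type*} [Preorder α] {n : ℕ} {x : Fin (n + 1) → α} {a : α}
    (hx : Monotone x) (ha : x (Fin.last n) ≤ a) : Monotone (Fin.snoc x a : Fin (n + 2) → α) := by
  refine Fin.monotone_iff_le_succ.2 fun i => ?_
  induction i using Fin.lastCases with
  | last => simpa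
  | cast k =>
    rw [Fin.succ_castSucc, Fin.snoc_castSucc, Fin.snoc_castSucc]
    exact hx (Fin.castSucc_le_succ k)

section Cells

variable {m : ℕ} (x : Fin (m + 1) → ℝ)

def cutPoints : Fin (m + 3) → ℝ := Matrix.vecCons 0 (Fin.snoc x 1)

def cellLength (c : Fin (m + 2)) : ℝ := cutPoints x c.succ - cutPoints x c.castSucc

theorem sum_Iic_cellLength (j : Fin (m + 1)) : ∑ c ∈ Iic j.castSucc, cellLength x c = x j :=
  (Fin.sum_Iic_sub _ _).trans (by simp [cutPoints])

theorem sum_cellLength : ∑ c, cellLength x c = 1 := by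
  rw [← Finset.Iic_top, Fin.top_eq_last]
  exact (Fin.sum_Iic_sub _ _).trans (by simp [cutPoints, -Fin.succ_last])

variable {x}

theorem cellLength_nonneg (hx : Monotone x) (hx01 : ∀ j, x j ∈ Set.Icc 0 1) (c : Fin (m + 2)) :
    0 ≤ cellLength x c := by
  have hcut : Monotone (cutPoints x) :=
    (Fin.monotone_snoc hx (hx01 _).2).vecCons (by simpa using (hx01 0).1)
  exact sub_nonneg.2 (Fin.monotone_iff_le_succ.1 hcut c)

end Cells

/-- `φ i` is the cell of the `i`-th sample point, so this is the `Nⱼ / n` of the proof idea. -/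
noncomputable def empiricalCDF {n m : ℕ} (φ : Fin n → Fin (m + 2)) (j : Fin (m + 1)) : ℝ :=
  #{i | φ i ≤ j.castSucc} / n

theorem monotone_empiricalCDF {n m : ℕ} (φ : Fin n → Fin (m + 2)) :
    Monotone (empiricalCDF φ) := by
  intro a b hab
  unfold empiricalCDF
  gcongr
  exact Fin.castSucc_le_castSucc_iff.2 hab

theorem empiricalCDF_mem_Icc {n m : ℕ} (φ : Fin n → Fin (m + 2)) (j : Fin (m + 1)) :
    empiricalCDF φ j ∈ Set.Icc 0 1 :=
  ⟨by unfold empiricalCDF; positivity,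
    div_le_one_of_le₀ (by exact_mod_cast (card_filter_le _ _).trans_eq (card_fin n))
      (Nat.cast_nonneg n)⟩

theorem bern_eq_sum_empiricalCDF (f : ℝ → ℝ) (n : ℕ) {m : ℕ} (x : Fin (m + 1) → ℝ)
    (j : Fin (m + 1)) :
    bern n f (x j) =
      ∑ φ : Fin n → Fin (m + 2), (∏ i, cellLength x (φ i)) * f (empiricalCDF φ j) := by
  rw [← sum_Iic_cellLength x j, bern_sum_eq_sum_pi f n _ (sum_cellLength x)]
  simp only [empiricalCDF, Finset.mem_Iic]

noncomputable def lamSum (l : ℕ → ℝ) (f : ℝ → ℝ) {m : ℕ} (x : Fin (m + 1) → ℝ)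
    (β : Equiv.Perm (Fin m)) : ℝ≥0∞ :=
  ∑ j : Fin m, ENNReal.ofReal (|f (x j.succ) - f (x j.castSucc)| / l (β j))

section LamVar

variable {l : ℕ → ℝ} {f : ℝ → ℝ} {K : Set ℝ}

theorem lamVarOn_le_iff {c : ℝ≥0∞} :
    lamVarOn l f K ≤ c ↔ ∀ (m : ℕ) (x : Fin (m + 1) → ℝ), Monotone x → (∀ j, x j ∈ K) →
      ∀ β, lamSum l f x β ≤ c := by
  simp only [lamVarOn, iSup_le_iff, lamSum]

theorem lamSum_le_lamVarOn {m : ℕ} {x : Fin (m + 1) → ℝ} (hx : Monotone x) (hK : ∀ j, x j ∈ K)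
    (β : Equiv.Perm (Fin m)) : lamSum l f x β ≤ lamVarOn l f K :=
  lamVarOn_le_iff.1 le_rfl m x hx hK β

theorem lamVarOn_le_liminf {ι : Type*} {L : Filter ι} [L.NeBot] {g : ι → ℝ → ℝ}
    (hg : ∀ x ∈ K, Tendsto (fun i => g i x) L (𝓝 (f x))) :
    lamVarOn l f K ≤ liminf (fun i => lamVarOn l (g i) K) L := by
  refine lamVarOn_le_iff.2 fun m x hx hK β => ?_
  have hsum : Tendsto (fun i => lamSum l (g i) x β) L (𝓝 (lamSum l f x β)) :=
    tendsto_finsetSum _ fun j _ => ENNReal.tendsto_ofReal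
      (((hg _ (hK _)).sub (hg _ (hK _))).abs.div_const _)
  rw [← hsum.liminf_eq]
  exact liminf_le_liminf (Eventually.of_forall fun i => lamSum_le_lamVarOn hx hK β)

theorem lamSum_le_sum_of_eq_sum (hl : ∀ i, 0 ≤ l i) {Ω : Type*} [Fintype Ω] {w : Ω → ℝ}
    (hw : ∀ ω, 0 ≤ w ω) {g : ℝ → ℝ} {m : ℕ} {x : Fin (m + 1) → ℝ} {y : Ω → Fin (m + 1) → ℝ}
    (hg : ∀ j, g (x j) = ∑ ω, w ω * f (y ω j)) (β : Equiv.Perm (Fin m)) :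
    lamSum l g x β ≤ ∑ ω, ENNReal.ofReal (w ω) * lamSum l f (y ω) β := by
  calc lamSum l g x β
      ≤ ∑ j : Fin m, ∑ ω, ENNReal.ofReal
          (w ω * (|f (y ω j.succ) - f (y ω j.castSucc)| / l (β j))) := by
        refine sum_le_sum fun j _ => ?_
        rw [← ENNReal.ofReal_sum_of_nonneg fun ω _ =>
          mul_nonneg (hw ω) (div_nonneg (abs_nonneg _) (hl _))]
        refine ENNReal.ofReal_le_ofReal ?_
        calc |g (x j.succ) - g (x j.castSucc)| / l (β j)
            ≤ (∑ ω, w ω * |f (y ω j.succ) - f (y ω j.castSucc)|) / l (β j) := by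
              gcongr
              · exact hl _
              rw [hg, hg, ← sum_sub_distrib]
              refine (abs_sum_le_sum_abs _ _).trans_eq (sum_congr rfl fun ω _ => ?_)
              rw [← mul_sub, abs_mul, abs_of_nonneg (hw ω)]
          _ = _ := by simp only [sum_div, mul_div_assoc]
    _ = ∑ ω, ENNReal.ofReal (w ω) * lamSum l f (y ω) β := by
        rw [sum_comm]
        simp only [lamSum, mul_sum, ENNReal.ofReal_mul (hw _)]

end LamVar

theorem lamVar_bern_le {l : ℕ → ℝ} (hl : ∀ i, 0 ≤ l i) (f : ℝ → ℝ) (n : ℕ) :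
    lamVar l (bern n f) ≤ lamVar l f := by
  refine lamVarOn_le_iff.2 fun m x hx hx01 β => ?_
  have hw (φ : Fin n → Fin (m + 2)) : 0 ≤ ∏ i, cellLength x (φ i) :=
    prod_nonneg fun i _ => cellLength_nonneg hx hx01 _
  calc lamSum l (bern n f) x β
      ≤ ∑ φ : Fin n → Fin (m + 2),
          ENNReal.ofReal (∏ i, cellLength x (φ i)) * lamSum l f (empiricalCDF φ) β :=
        lamSum_le_sum_of_eq_sum hl hw (bern_eq_sum_empiricalCDF f n x) β
    _ ≤ ∑ φ : Fin n → Fin (m + 2), ENNReal.ofReal (∏ i, cellLength x (φ i)) * lamVar l f := by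
        gcongr with φ
        exact lamSum_le_lamVarOn (monotone_empiricalCDF φ) (empiricalCDF_mem_Icc φ) β
    _ = lamVar l f := by
        rw [← sum_mul, ← ENNReal.ofReal_sum_of_nonneg fun φ _ => hw φ, ← Fintype.prod_sum]
        simp [sum_cellLength]

theorem lamNorm_bernstein_tendsto_general (l : ℕ → ℝ) (hl : IsLambdaSeq l)
    (f : ℝ → ℝ) (hc : ContinuousOn f (Set.Icc 0 1)) :
    Tendsto (fun n => lamNorm l (bern n f)) atTop (𝓝 (lamNorm l f)) := by
  obtain ⟨-, hl_pos, -⟩ := hl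
  have hvar : Tendsto (fun n => lamVar l (bern n f)) atTop (𝓝 (lamVar l f)) :=
    tendsto_of_le_liminf_of_limsup_le (lamVarOn_le_liminf fun x hx => tendsto_bern hc hx)
      (limsup_le_of_le (by isBoundedDefault)
        (Eventually.of_forall (lamVar_bern_le (fun i => (hl_pos i).le) f)))
  simpa only [lamNorm, bern_apply_zero] using hvar.add_const (ENNReal.ofReal |f 0|)

/-- If `Λ` is a Λ-sequence and `f : [0,1] → ℝ` is continuous and of bounded
Λ-variation, then `‖B_n f‖_Λ → ‖f‖_Λ` as `n → ∞`. -/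
theorem lamNorm_bernstein_tendsto (l : ℕ → ℝ) (hl : IsLambdaSeq l)
    (f : ℝ → ℝ) (hc : ContinuousOn f (Set.Icc 0 1)) (hf : lamVar l f < ⊤) :
    Tendsto (fun n => lamNorm l (bern n f)) atTop (𝓝 (lamNorm l f)) :=
  lamNorm_bernstein_tendsto_general l hl f hc
end
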